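/- With the notation of the vertex cover reduction (n ≥ 1, s = (n+4)³, R = R_{n+4}, X_∅ = (V − s − n) ∪ (R − s) ∪ (R + n) ∪ (V + s + n) where V = {1,…,n}): for every t ∈ ℤ, if |(R + t) \ X_∅| < n then t ∈ {−s, n}. -/

import Mathlib

/-- `Rset m = {(i-1)·m² + i² : 1 ≤ i ≤ m}` as a finite set of integers. -/
def Rset (m : ℕ) : Finset ℤ :=
  (Finset.Icc 1 m).image fun i : ℕ => ((i : ℤ) - 1) * (m : ℤ) ^ 2 + (i : ℤ) ^ 2

/-- The translate `S + t = {s + t : s ∈ S}`. -/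
def shift (S : Finset ℤ) (t : ℤ) : Finset ℤ := S.image (· + t)

/-- The shift value `s = (n+4)³` of the vertex-cover reduction. -/
def sVal (n : ℕ) : ℤ := ((n : ℤ) + 4) ^ 3

/-- `X_∅ = (V - s - n) ∪ (R - s) ∪ (R + n) ∪ (V + s + n)` where `V = {1,…,n}`
and `R = R_{n+4}`. -/
noncomputable def Xzero (n : ℕ) : Finset ℤ :=
  shift (Finset.Icc (1 : ℤ) (n : ℤ)) (-(sVal n + n)) ∪ shift (Rset (n + 4)) (-sVal n)
    ∪ shift (Rset (n + 4)) n ∪ shift (Finset.Icc (1 : ℤ) (n : ℤ)) (sVal n + n)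

/-- `X_e = {z_e - n} ∪ R ∪ {y_e + s}` for an edge `e` with endpoints `y_e`, `z_e`. -/
def Xedge (n : ℕ) (ye ze : ℤ) : Finset ℤ :=
  {ze - (n : ℤ)} ∪ Rset (n + 4) ∪ {ye + sVal n}

/-- The reduction family `(X_a)_{a ∈ A}` with `A = {∅} ∪ E`, modelled on `Option E`
(`none` plays the role of `∅`). -/
noncomputable def Xfam (n : ℕ) {E : Type*} (y z : E → ℤ) : Option E → Finset ℤ :=
  fun a => a.elim (Xzero n) fun e => Xedge n (y e) (z e)

/-
Two translates of a Golomb ruler that share two points coincide, and the marks of `R_m` are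
more than `m²` apart, so `R_m + t` meets each translate of `V = {1,…,n}` (with `n ≤ m²`) in at
most one point. If `|(R + t) \ X_∅| < n` then `R + t` has at least five points in `X_∅`, at
most two of them in the `V`-blocks, hence two in `R - s` or in `R + n`, forcing `t = -s` or
`t = n`.
-/
def rulerMark (m i : ℕ) : ℤ := ((i : ℤ) - 1) * (m : ℤ) ^ 2 + (i : ℤ) ^ 2

def IsGolombRuler (S : Finset ℤ) : Prop :=
  ∀ ⦃a⦄, a ∈ S → ∀ ⦃b⦄, b ∈ S → ∀ ⦃c⦄, c ∈ S → ∀ ⦃d⦄, d ∈ S → a ≠ b → a - b = c - d → a = c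

lemma mem_shift {S : Finset ℤ} {t x : ℤ} : x ∈ shift S t ↔ ∃ y ∈ S, y + t = x :=
  Finset.mem_image

lemma card_shift (S : Finset ℤ) (t : ℤ) : (shift S t).card = S.card :=
  Finset.card_image_of_injective _ (add_left_injective t)

lemma IsGolombRuler.eq_of_two_le_card_inter_shift {S : Finset ℤ} (hS : IsGolombRuler S)
    {t t' : ℤ} (h : 2 ≤ (shift S t ∩ shift S t').card) : t = t' := by
  obtain ⟨x, hx, y, hy, hxy⟩ := Finset.one_lt_card.mp h
  simp only [Finset.mem_inter, mem_shift] at hx hy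
  obtain ⟨⟨a, ha, rfl⟩, ⟨c, hc, hac⟩⟩ := hx
  obtain ⟨⟨b, hb, rfl⟩, ⟨d, hd, hbd⟩⟩ := hy
  have := hS ha hb hc hd (by rintro rfl; exact hxy rfl) (by linarith)
  linarith

lemma card_inter_le_one_of_separated {S T : Finset ℤ} {δ : ℤ}
    (hS : ∀ x ∈ S, ∀ y ∈ S, x ≠ y → δ ≤ |x - y|) (hT : ∀ x ∈ T, ∀ y ∈ T, |x - y| < δ) :
    (S ∩ T).card ≤ 1 := by
  refine Finset.card_le_one.mpr fun x hx y hy => ?_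
  rw [Finset.mem_inter] at hx hy
  by_contra hxy
  exact (hS x hx.1 y hy.1 hxy).not_gt (hT x hx.2 y hy.2)

lemma abs_sub_lt_of_mem_shift_Icc {k : ℕ} {c x y : ℤ} (hx : x ∈ shift (Finset.Icc 1 (k : ℤ)) c)
    (hy : y ∈ shift (Finset.Icc 1 (k : ℤ)) c) : |x - y| < k := by
  simp only [mem_shift, Finset.mem_Icc] at hx hy
  obtain ⟨u, hu, rfl⟩ := hx
  obtain ⟨v, hv, rfl⟩ := hy
  rw [abs_lt]; constructor <;> linarith

lemma card_inter_union_le (S A B : Finset ℤ) :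
    (S ∩ (A ∪ B)).card ≤ (S ∩ A).card + (S ∩ B).card := by
  rw [Finset.inter_union_distrib_left]; exact Finset.card_union_le _ _

section Rset

variable {m : ℕ}

lemma Rset_eq_image : Rset m = (Finset.Icc 1 m).image (rulerMark m) := rfl

lemma mem_Rset {x : ℤ} : x ∈ Rset m ↔ ∃ i, (1 ≤ i ∧ i ≤ m) ∧ rulerMark m i = x := by
  simp only [Rset_eq_image, Finset.mem_image, Finset.mem_Icc]

lemma rulerMark_strictMono : StrictMono (rulerMark m) := by
  intro i j hij
  have hij' : (i : ℤ) + 1 ≤ j := by exact_mod_cast hij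
  unfold rulerMark
  nlinarith [sq_nonneg (m : ℤ)]

lemma rulerMark_add_le {i j : ℕ} (hi : 1 ≤ i) (hij : i < j) :
    rulerMark m i + ((m : ℤ) ^ 2 + 3) ≤ rulerMark m j := by
  have hi' : (1 : ℤ) ≤ i := by exact_mod_cast hi
  have hij' : (i : ℤ) + 1 ≤ j := by exact_mod_cast hij
  unfold rulerMark
  nlinarith

lemma le_abs_sub_of_mem_Rset {x y : ℤ} (hx : x ∈ Rset m) (hy : y ∈ Rset m) (hxy : x ≠ y) :
    (m : ℤ) ^ 2 + 3 ≤ |x - y| := by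
  obtain ⟨i, ⟨hi, -⟩, rfl⟩ := mem_Rset.mp hx
  obtain ⟨j, ⟨hj, -⟩, rfl⟩ := mem_Rset.mp hy
  rcases lt_trichotomy i j with hij | rfl | hij
  · rw [abs_sub_comm, abs_of_nonneg] <;>
      linarith [rulerMark_add_le (m := m) hi hij, sq_nonneg (m : ℤ)]
  · exact absurd rfl hxy
  · rw [abs_of_nonneg] <;> linarith [rulerMark_add_le (m := m) hj hij, sq_nonneg (m : ℤ)]

lemma card_Rset : (Rset m).card = m := by
  rw [Rset_eq_image, Finset.card_image_of_injective _ rulerMark_strictMono.injective,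
    Nat.card_Icc, Nat.add_sub_cancel]

/-- `rulerMark m i - rulerMark m j = (i - j) m² + (i² - j²)` with `0 < i² - j² < m²` for
`1 ≤ j < i ≤ m`: a base-`m²` expansion, so the difference determines `i - j` and `i² - j²`. -/
lemma eq_of_rulerMark_sub_eq {i j k l : ℕ} (hj : 1 ≤ j) (hji : j < i) (hi : i ≤ m) (hl : 1 ≤ l)
    (hk : k ≤ m) (h : rulerMark m i - rulerMark m j = rulerMark m k - rulerMark m l) :
    i = k := by
  have hlk : l < k := by
    by_contra! hkl
    linarith [(rulerMark_strictMono (m := m)).monotone hkl, rulerMark_strictMono (m := m) hji]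
  zify at *
  unfold rulerMark at h
  set M : ℤ := (m : ℤ) ^ 2
  have key : ((i - j) - (k - l) : ℤ) * M = ((k : ℤ) ^ 2 - l ^ 2) - (i ^ 2 - j ^ 2) := by
    linear_combination h
  have hij_pos : (0 : ℤ) < i ^ 2 - j ^ 2 := by nlinarith
  have hij_lt : (i : ℤ) ^ 2 - j ^ 2 < M := by nlinarith
  have hkl_pos : (0 : ℤ) < k ^ 2 - l ^ 2 := by nlinarith
  have hkl_lt : (k : ℤ) ^ 2 - l ^ 2 < M := by nlinarith
  have hdiff : (i - j : ℤ) = k - l := by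
    rcases lt_trichotomy ((i - j) - (k - l) : ℤ) 0 with hneg | hzero | hpos
    · nlinarith
    · linarith
    · nlinarith
  have hsum : (i + j : ℤ) = k + l := by
    have hsq : ((i - j) * (i + j) : ℤ) = (k - l) * (k + l) := by
      rw [hdiff, sub_self, zero_mul] at key; linear_combination key
    rw [hdiff] at hsq
    exact mul_left_cancel₀ (by linarith) hsq
  linarith

lemma isGolombRuler_Rset : IsGolombRuler (Rset m) := by
  intro a ha b hb c hc d hd hab habcd
  obtain ⟨i, ⟨hi, hi'⟩, rfl⟩ := mem_Rset.mp ha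
  obtain ⟨j, ⟨hj, hj'⟩, rfl⟩ := mem_Rset.mp hb
  obtain ⟨k, ⟨hk, hk'⟩, rfl⟩ := mem_Rset.mp hc
  obtain ⟨l, ⟨hl, hl'⟩, rfl⟩ := mem_Rset.mp hd
  rcases lt_or_gt_of_ne (mt (congrArg (rulerMark m)) hab) with hij | hji
  · have := eq_of_rulerMark_sub_eq hi hij hj' hk hl' (by linarith)
    subst this
    linarith
  · rw [eq_of_rulerMark_sub_eq hj hji hi' hl hk' habcd]

lemma card_shift_Rset_inter_shift_Icc_le_one {k : ℕ} (hk : (k : ℤ) ≤ (m : ℤ) ^ 2 + 3)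
    (t c : ℤ) : (shift (Rset m) t ∩ shift (Finset.Icc 1 (k : ℤ)) c).card ≤ 1 := by
  refine card_inter_le_one_of_separated (δ := k) ?_
    fun x hx y hy => abs_sub_lt_of_mem_shift_Icc hx hy
  intro x hx y hy hxy
  obtain ⟨a, ha, rfl⟩ := mem_shift.mp hx
  obtain ⟨b, hb, rfl⟩ := mem_shift.mp hy
  rw [add_sub_add_right_eq_sub]
  exact hk.trans (le_abs_sub_of_mem_Rset ha hb (by rintro rfl; exact hxy rfl))

end Rset

lemma card_inter_Xzero_le (n : ℕ) (S : Finset ℤ) :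
    (S ∩ Xzero n).card ≤ (S ∩ shift (Finset.Icc 1 (n : ℤ)) (-(sVal n + n))).card
      + (S ∩ shift (Rset (n + 4)) (-sVal n)).card + (S ∩ shift (Rset (n + 4)) n).card
      + (S ∩ shift (Finset.Icc 1 (n : ℤ)) (sVal n + n)).card :=
  (card_inter_union_le _ _ _).trans <| Nat.add_le_add_right
    ((card_inter_union_le _ _ _).trans <| Nat.add_le_add_right (card_inter_union_le _ _ _) _) _

theorem stmt_15_general (n : ℕ) (t : ℤ)
    (h : (shift (Rset (n + 4)) t \ Xzero n).card < n) :
    t = -sVal n ∨ t = (n : ℤ) := by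
  set S := shift (Rset (n + 4)) t
  have hmeet : 5 ≤ (S ∩ Xzero n).card := by
    have := Finset.card_inter_add_card_sdiff S (Xzero n)
    rw [card_shift, card_Rset] at this
    omega
  have hV (c : ℤ) : (S ∩ shift (Finset.Icc 1 (n : ℤ)) c).card ≤ 1 :=
    card_shift_Rset_inter_shift_Icc_le_one (by push_cast; nlinarith) t c
  have hsplit := card_inter_Xzero_le n S
  have hV_left := hV (-(sVal n + n))
  have hV_right := hV (sVal n + n)
  rcases (by omega : 2 ≤ (S ∩ shift (Rset (n + 4)) (-sVal n)).card ∨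
      2 ≤ (S ∩ shift (Rset (n + 4)) n).card) with h2 | h3
  · exact Or.inl (isGolombRuler_Rset.eq_of_two_le_card_inter_shift h2)
  · exact Or.inr (isGolombRuler_Rset.eq_of_two_le_card_inter_shift h3)

theorem stmt_15 (n : ℕ) (hn : 1 ≤ n) (t : ℤ)
    (h : (shift (Rset (n + 4)) t \ Xzero n).card < n) :
    t = -sVal n ∨ t = (n : ℤ) :=
  stmt_15_general n t h
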